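/- arXiv:1701.07340 — 4 statements merged into one kernel-verified Lean document; each statement's English description precedes it below -/
import Mathlib

section
/- Let δ ≥ 2 and j ≥ 1 be integers, and write n_j = p_j(j+δ-1) + q_j with 0 ≤ q_j ≤ j+δ-2. If an integer ξ satisfies n_j ≥ ξ + ⌈ξ/j⌉(δ-1) and 0 ≤ q_j ≤ δ-2, then ξ ≤ p_j·j. -/
theorem xi_bound_case1 (δ j p q n ξ : ℤ) (hδ : 2 ≤ δ) (hj : 1 ≤ j)
    (hp : 0 ≤ p) (hξ : 0 ≤ ξ)
    (hn : n = p * (j + δ - 1) + q) (hq0 : 0 ≤ q) (hq : q ≤ δ - 2)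
    (h : n ≥ ξ + ⌈(ξ : ℚ) / (j : ℚ)⌉ * (δ - 1)) :
    ξ ≤ p * j := by
  by_contra hlt
  push_neg at hlt
  have hjq : (0:ℚ) < (j:ℚ) := by exact_mod_cast lt_of_lt_of_le zero_lt_one hj
  have hc : p + 1 ≤ ⌈(ξ : ℚ) / (j : ℚ)⌉ := by
    rw [Int.add_one_le_iff, Int.lt_ceil, lt_div_iff₀ hjq]
    exact_mod_cast by linarith
  have hmul : (p + 1) * (δ - 1) ≤ ⌈(ξ : ℚ) / (j : ℚ)⌉ * (δ - 1) :=
    mul_le_mul_of_nonneg_right hc (by linarith)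
  nlinarith
end

section
/- Let δ ≥ 2 and j ≥ 1 be integers, and write n_j = p_j(j+δ-1) + q_j with δ-1 ≤ q_j ≤ j+δ-2. If an integer ξ satisfies n_j ≥ ξ + ⌈ξ/j⌉(δ-1), then ξ ≤ p_j·j + q_j - (δ-1). -/
theorem xi_bound_case2 (δ j p q n ξ : ℤ) (hδ : 2 ≤ δ) (hj : 1 ≤ j)
    (hp : 0 ≤ p) (hξ : 0 ≤ ξ)
    (hn : n = p * (j + δ - 1) + q) (hq0 : δ - 1 ≤ q) (hq : q ≤ j + δ - 2)
    (h : n ≥ ξ + ⌈(ξ : ℚ) / (j : ℚ)⌉ * (δ - 1)) :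
    ξ ≤ p * j + q - (δ - 1) := by
  by_contra hc
  push_neg at hc
  have hξ' : p * j + 1 ≤ ξ := by linarith
  have hjq : (0:ℚ) < (j:ℚ) := by exact_mod_cast lt_of_lt_of_le one_pos hj
  have hceil : p + 1 ≤ ⌈(ξ : ℚ) / (j : ℚ)⌉ := by
    rw [Int.add_one_le_iff, Int.lt_ceil, lt_div_iff₀ hjq]
    push_cast
    exact_mod_cast by linarith [hξ']
  nlinarith [hceil, hδ]
end

section
/- Let δ ≥ 2 and r ≥ 1 be integers, let n_r = p_r(r+δ-1) + q_r with δ-1 ≤ q_r ≤ r+δ-2, and set m_r = n_r/(r+δ-1) (a rational) and k_r = n_r - ⌈m_r⌉(δ-1). Then n_r - k_r ≥ (k_r/r)(δ-1). -/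
theorem nk_bound_case2 (δ r p q n : ℤ) (hδ : 2 ≤ δ) (hr : 1 ≤ r)
    (hp : 0 ≤ p) (hq0 : δ - 1 ≤ q) (hq : q ≤ r + δ - 2)
    (hn : n = p * (r + δ - 1) + q) :
    (n : ℚ) - ((n - ⌈(n : ℚ) / ((r : ℚ) + δ - 1)⌉ * (δ - 1) : ℤ) : ℚ) ≥
      ((n - ⌈(n : ℚ) / ((r : ℚ) + δ - 1)⌉ * (δ - 1) : ℤ) : ℚ) / (r : ℚ) * ((δ : ℚ) - 1) := by
  have hrQ : (1:ℚ) ≤ (r:ℚ) := by exact_mod_cast hr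
  have hδQ : (2:ℚ) ≤ (δ:ℚ) := by exact_mod_cast hδ
  have hpQ : (0:ℚ) ≤ (p:ℚ) := by exact_mod_cast hp
  have hq0Q : (δ:ℚ) - 1 ≤ (q:ℚ) := by exact_mod_cast hq0
  have hqQ : (q:ℚ) ≤ (r:ℚ) + δ - 2 := by exact_mod_cast hq
  have hnQ : (n:ℚ) = p * ((r:ℚ) + δ - 1) + q := by exact_mod_cast hn
  have hD : (0:ℚ) < (r:ℚ) + δ - 1 := by linarith
  have hceil : ⌈(n : ℚ) / ((r : ℚ) + δ - 1)⌉ = p + 1 := by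
    rw [Int.ceil_eq_iff]
    constructor
    · push_cast
      rw [lt_div_iff₀ hD, hnQ]
      nlinarith
    · push_cast
      rw [div_le_iff₀ hD, hnQ]
      nlinarith
  rw [hceil]
  push_cast
  rw [hnQ, ge_iff_le, div_mul_eq_mul_div, div_le_iff₀ (by linarith : (0:ℚ) < (r:ℚ))]
  nlinarith [mul_nonneg (sub_nonneg.2 hq0Q) (by linarith : (0:ℚ) ≤ (δ:ℚ)-1)]
end

section
/- Let C be a linear [n,k,d] code over a finite field with generator matrix G, and let T ⊆ {1,...,n} be a set of coordinate positions such that the rank of the corresponding columns of G is at most k-1. Then d ≤ n - k + 1 - (|T| - rank(G|_T)). -/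
theorem distance_upper_bound_rank_deficient
    (F : Type*) [Field F] [Fintype F] [DecidableEq F] (n k d : ℕ)
    (G : Matrix (Fin k) (Fin n) F) (hG : G.rank = k)
    (hd : ∀ u : Fin k → F, u ≠ 0 → d ≤ hammingNorm (Matrix.vecMul u G))
    (hd' : ∃ u : Fin k → F, u ≠ 0 ∧ hammingNorm (Matrix.vecMul u G) = d)
    (T : Finset (Fin n))
    (hT : (G.submatrix id (fun i : T => (i : Fin n))).rank ≤ k - 1) :
    (d : ℤ) ≤ (n : ℤ) - T.card ∧
      (d : ℤ) ≤ (n : ℤ) - k + 1 -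
        ((T.card : ℤ) - (G.submatrix id (fun i : T => (i : Fin n))).rank) := by
  classical
  set A := G.submatrix id (fun i : T => (i : Fin n)) with hA
  set r := A.rank with hr
  -- k ≥ 1
  obtain ⟨u0, hu0, -⟩ := hd'
  have hk : 1 ≤ k := by
    rcases Nat.eq_zero_or_pos k with h | h
    · subst h
      exact absurd (funext fun i => i.elim0) hu0
    · exact h
  have hrk : r < k := by omega
  -- dimension of the kernel of vecMul with A
  have hrankA : Module.finrank F (LinearMap.range A.vecMulLinear) = r := by
    rw [← Matrix.mulVecLin_transpose]
    exact Matrix.rank_transpose A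
  have hkerA : Module.finrank F (LinearMap.ker A.vecMulLinear) = k - r := by
    have h1 := LinearMap.finrank_range_add_finrank_ker A.vecMulLinear
    rw [Module.finrank_fin_fun, hrankA] at h1
    omega
  set U := LinearMap.ker A.vecMulLinear with hU
  -- u ∈ U means vecMul u G vanishes on T
  have hUmem : ∀ u ∈ U, ∀ j ∈ T, Matrix.vecMul u G j = 0 := by
    intro u hu j hj
    have : Matrix.vecMul u A ⟨j, hj⟩ = 0 := by
      have := (LinearMap.mem_ker).mp hu
      rw [Matrix.vecMulLinear_apply] at this
      exact congrFun this ⟨j, hj⟩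
    simpa [hA, Matrix.vecMul, dotProduct, Matrix.submatrix] using this
  -- G.vecMulLinear is injective
  have hGinj : Function.Injective G.vecMulLinear := by
    rw [← LinearMap.ker_eq_bot]
    have h1 := LinearMap.finrank_range_add_finrank_ker G.vecMulLinear
    have h2 : Module.finrank F (LinearMap.range G.vecMulLinear) = k := by
      rw [← Matrix.mulVecLin_transpose]
      exact (Matrix.rank_transpose G).trans hG
    rw [Module.finrank_fin_fun, h2] at h1
    have h3 : Module.finrank F (LinearMap.ker G.vecMulLinear) = 0 := by omega
    exact Submodule.finrank_eq_zero.mp h3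
  -- restriction to the complement of T, injective on U
  set B := G.submatrix id (fun i : (Tᶜ : Finset (Fin n)) => (i : Fin n)) with hB
  have hBinj : Function.Injective (B.vecMulLinear.domRestrict U) := by
    rw [← LinearMap.ker_eq_bot]
    rw [Submodule.eq_bot_iff]
    rintro ⟨u, hu⟩ hmem
    have h0 : Matrix.vecMul u B = 0 := by
      simpa using (LinearMap.mem_ker).mp hmem
    have : Matrix.vecMul u G = 0 := by
      funext j
      by_cases hj : j ∈ T
      · exact hUmem u hu j hj
      · have hj' : j ∈ (Tᶜ : Finset (Fin n)) := Finset.mem_compl.mpr hj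
        have := congrFun h0 ⟨j, hj'⟩
        simpa [hB, Matrix.vecMul, dotProduct, Matrix.submatrix] using this
    have : G.vecMulLinear u = 0 := by simpa using this
    have : u = 0 := hGinj (by simpa using this)
    exact Subtype.ext (by simpa using this)
  have hdimle : k - r ≤ (Tᶜ : Finset (Fin n)).card := by
    have h := LinearMap.finrank_le_finrank_of_injective hBinj
    have h2 : Module.finrank F ((Tᶜ : Finset (Fin n)) → F) = (Tᶜ : Finset (Fin n)).card := by
      rw [Module.finrank_pi]
      exact Fintype.card_coe _
    rw [hkerA, h2] at h
    exact h
  have hTcardle : T.card ≤ n := by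
    simpa using Finset.card_le_univ T
  have hTc : (Tᶜ : Finset (Fin n)).card = n - T.card := by
    simp [Finset.card_compl]
  -- choose S ⊆ Tᶜ of size k - r - 1
  obtain ⟨S, hSsub, hScard⟩ :=
    Finset.exists_subset_card_eq (s := (Tᶜ : Finset (Fin n))) (n := k - r - 1) (by omega)
  set C := G.submatrix id (fun i : S => (i : Fin n)) with hC
  -- kernel of restriction of C.vecMulLinear to U is nontrivial
  set σ := C.vecMulLinear.domRestrict U with hσ
  have hkerσ : 1 ≤ Module.finrank F (LinearMap.ker σ) := by
    have h1 := LinearMap.finrank_range_add_finrank_ker σ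
    have h2 : Module.finrank F (LinearMap.range σ) ≤ S.card := by
      have := Submodule.finrank_le (LinearMap.range σ)
      simpa [Module.finrank_pi] using this
    rw [hkerA] at h1
    omega
  have : LinearMap.ker σ ≠ ⊥ := by
    intro h
    rw [h] at hkerσ
    simp at hkerσ
  obtain ⟨x, hx, hx0⟩ := Submodule.exists_mem_ne_zero_of_ne_bot this
  set u : Fin k → F := (x : Fin k → F) with hu
  have hune : u ≠ 0 := by
    intro h
    exact hx0 (Subtype.ext h)
  -- vecMul u G vanishes on T ∪ S
  have hvanish : ∀ j ∈ T ∪ S, Matrix.vecMul u G j = 0 := by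
    intro j hj
    rcases Finset.mem_union.mp hj with hj | hj
    · exact hUmem u x.2 j hj
    · have h0 : Matrix.vecMul u C = 0 := by
        simpa [hσ] using (LinearMap.mem_ker).mp hx
      have := congrFun h0 ⟨j, hj⟩
      simpa [hC, Matrix.vecMul, dotProduct, Matrix.submatrix] using this
  -- weight bound
  have hwt : hammingNorm (Matrix.vecMul u G) ≤ ((T ∪ S)ᶜ : Finset (Fin n)).card := by
    apply Finset.card_le_card
    intro j hj
    simp only [hammingNorm, Finset.mem_filter] at hj
    rw [Finset.mem_compl]
    intro hmem
    exact hj.2 (hvanish j hmem)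
  have hdisj : Disjoint T S := by
    refine Finset.disjoint_left.mpr fun a ha ha' => ?_
    exact Finset.mem_compl.mp (hSsub ha') ha
  have hunion : (T ∪ S).card = T.card + (k - r - 1) := by
    rw [Finset.card_union_of_disjoint hdisj, hScard]
  have hcardcompl : ((T ∪ S)ᶜ : Finset (Fin n)).card = n - (T.card + (k - r - 1)) := by
    rw [Finset.card_compl, hunion]
    simp
  have hfinal : d ≤ n - (T.card + (k - r - 1)) := by
    calc d ≤ hammingNorm (Matrix.vecMul u G) := hd u hune
    _ ≤ ((T ∪ S)ᶜ : Finset (Fin n)).card := hwt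
    _ = n - (T.card + (k - r - 1)) := hcardcompl
  have hroom : k - r - 1 ≤ n - T.card := by omega
  exact ⟨by omega, by omega⟩
end
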